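/- The only perfect squares in the Lucas sequence are L₁ = 1 and L₃ = 4; i.e., if Lₖ = m² for integers k ≥ 0 and m, then k ∈ {1, 3}. -/
import Mathlib

def lucas : ℕ → ℕ
  | 0 => 2
  | 1 => 1
  | k + 2 => lucas (k + 1) + lucas k

open Nat

lemma lucas_add_two (k : ℕ) : lucas (k + 2) = lucas (k + 1) + lucas k := rfl

lemma lucas_add_fib (m : ℕ) :
    ∀ n, lucas (m + n + 1) = lucas (m + 1) * fib (n + 1) + lucas m * fib n := by
  intro n
  induction n using Nat.twoStepInduction with
  | zero => simp
  | one =>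
      show lucas (m + 2) = _
      rw [lucas_add_two]
      simp [fib_one, fib_two]
  | more n ih1 ih2 =>
      have e1 : m + (n + 2) + 1 = (m + n + 1) + 2 := by omega
      rw [e1, lucas_add_two]
      have e2 : m + n + 1 + 1 = m + (n + 1) + 1 := by omega
      rw [e2, ih2, ih1]
      have f1 : fib (n + 2) = fib n + fib (n + 1) := fib_add_two
      have f2 : fib (n + 3) = fib (n + 1) + fib (n + 2) := fib_add_two
      rw [f2, f1]
      ring

lemma cassini : ∀ n : ℕ, (fib (n + 2) : ℤ) * fib n - (fib (n + 1) : ℤ) ^ 2 = (-1) ^ (n + 1) := by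
  intro n
  induction n with
  | zero => simp
  | succ n ih =>
      have f1 : (fib (n + 2) : ℤ) = fib n + fib (n + 1) := by exact_mod_cast (fib_add_two : fib (n+2) = _)
      have f2 : (fib (n + 3) : ℤ) = fib (n + 1) + fib (n + 2) := by exact_mod_cast (fib_add_two : fib (n+3) = _)
      rw [f1] at ih
      rw [f2, f1]
      linear_combination (-1 : ℤ) * ih

lemma lucas_succ_eq : ∀ n, lucas (n + 1) = fib n + fib (n + 2) := by
  intro n
  induction n using Nat.twoStepInduction with
  | zero => decide
  | one => decide
  | more n ih1 ih2 =>
      show lucas ((n + 1) + 2) = _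
      rw [lucas_add_two, ih1, ih2]
      have g1 : fib (n + 1 + 2) = fib (n + 3) := rfl
      have g2 : fib (n + 2 + 2) = fib (n + 4) := rfl
      have f1 : fib (n + 2) = fib n + fib (n + 1) := fib_add_two
      have f2 : fib (n + 3) = fib (n + 1) + fib (n + 2) := fib_add_two
      have f3 : fib (n + 4) = fib (n + 2) + fib (n + 3) := fib_add_two
      omega

lemma fib_two_mul_lucas (s : ℕ) : fib (2 * s + 2) = fib (s + 1) * lucas (s + 1) := by
  have h := fib_add s (s + 1)
  have e : s + (s + 1) + 1 = 2 * s + 2 := by omega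
  rw [e] at h
  rw [h, lucas_succ_eq]
  ring

lemma key_odd (s : ℕ) (hs : Odd s) :
    (fib (2 * s + 3) : ℤ) + 1 = fib (s + 2) * lucas (s + 1) := by
  have h : fib (2 * (s + 1) + 1) = fib (s + 2) ^ 2 + fib (s + 1) ^ 2 := fib_two_mul_add_one (s + 1)
  have e : 2 * (s + 1) + 1 = 2 * s + 3 := by omega
  rw [e] at h
  have hc := cassini s
  have hpow : ((-1 : ℤ)) ^ (s + 1) = 1 := Even.neg_one_pow (by simpa using hs.add_one)
  rw [hpow] at hc
  have hL : (lucas (s + 1) : ℤ) = fib s + fib (s + 2) := by exact_mod_cast lucas_succ_eq s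
  have hz : (fib (2 * s + 3) : ℤ) = (fib (s + 2) : ℤ) ^ 2 + (fib (s + 1) : ℤ) ^ 2 := by
    exact_mod_cast h
  rw [hz, hL]
  linear_combination -hc

lemma lucas_step (t : ℕ) (ht : 2 ≤ t) (hte : Even t) (m : ℕ) :
    Int.ModEq (lucas t) (lucas (m + 2 * t)) (-(lucas m)) := by
  obtain ⟨s, hs⟩ : ∃ s, t = s + 1 := ⟨t - 1, by omega⟩
  have hsodd : Odd s := by
    rcases hte with ⟨c, hc⟩
    exact ⟨c - 1, by omega⟩
  subst hs
  have h1 : (lucas (m + 2 * (s + 1)) : ℤ)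
      = lucas (m + 1) * fib (2 * s + 2) + lucas m * fib (2 * s + 1) := by
    have := lucas_add_fib m (2 * s + 1)
    have e : m + (2 * s + 1) + 1 = m + 2 * (s + 1) := by omega
    rw [e] at this
    exact_mod_cast this
  have h2 : (fib (2 * s + 2) : ℤ) = fib (s + 1) * lucas (s + 1) := by
    exact_mod_cast fib_two_mul_lucas s
  have h3 := key_odd s hsodd
  have h4 : (fib (2 * s + 3) : ℤ) = fib (2 * s + 1) + fib (2 * s + 2) := by
    exact_mod_cast (fib_add_two : fib (2 * s + 1 + 2) = _)
  have hdvd : (lucas (s + 1) : ℤ) ∣ (lucas (m + 2 * (s + 1)) : ℤ) + lucas m := by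
    refine ⟨lucas (m + 1) * fib (s + 1) + lucas m * (fib (s + 2) - fib (s + 1)), ?_⟩
    linear_combination h1 + (lucas (m + 1) : ℤ) * h2 + (lucas m : ℤ) * (h3 - h4 - h2)
  have hneg : (lucas (s + 1) : ℤ) ∣ (-(lucas m) : ℤ) - lucas (m + 2 * (s + 1)) := by
    obtain ⟨x, hx⟩ := hdvd
    exact ⟨-x, by linear_combination -hx⟩
  exact Int.modEq_iff_dvd.mpr hneg

lemma lucas_iter (t : ℕ) (ht : 2 ≤ t) (hte : Even t) (m : ℕ) :
    ∀ j, Int.ModEq (lucas t) (lucas (m + 2 * t * j)) ((-1) ^ j * lucas m) := by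
  intro j
  induction j with
  | zero => simpa using Int.ModEq.refl _
  | succ j ih =>
      have e : m + 2 * t * (j + 1) = (m + 2 * t * j) + 2 * t := by ring
      rw [e]
      have hstep := lucas_step t ht hte (m + 2 * t * j)
      have := hstep.trans ih.neg
      have e2 : -((-1 : ℤ) ^ j * lucas m) = (-1) ^ (j + 1) * lucas m := by ring
      rwa [e2] at this

lemma lucas_mod8 : ∀ k, lucas (k + 12) % 8 = lucas k % 8 := by
  intro k
  induction k using Nat.twoStepInduction with
  | zero => decide
  | one => decide
  | more n ih1 ih2 =>
      have e : n + 2 + 12 = (n + 12) + 2 := by omega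
      rw [e, lucas_add_two (n + 12)]
      have e2 : n + 12 + 1 = (n + 1) + 12 := by omega
      rw [e2, lucas_add_two n]
      rw [Nat.add_mod, Nat.add_mod (lucas (n + 1)), ih1, ih2]

lemma lucas_mod8_mod : ∀ k, lucas k % 8 = lucas (k % 12) % 8 := by
  intro k
  induction k using Nat.strong_induction_on with
  | _ k ih =>
      by_cases hk : k < 12
      · rw [Nat.mod_eq_of_lt hk]
      · have e : k = (k - 12) + 12 := by omega
        rw [e, lucas_mod8, ih (k - 12) (by omega)]
        congr 2
        omega

lemma lucas_mod4 : ∀ k, lucas (k + 6) % 4 = lucas k % 4 := by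
  intro k
  induction k using Nat.twoStepInduction with
  | zero => decide
  | one => decide
  | more n ih1 ih2 =>
      have e : n + 2 + 6 = (n + 6) + 2 := by omega
      rw [e, lucas_add_two (n + 6)]
      have e2 : n + 6 + 1 = (n + 1) + 6 := by omega
      rw [e2, lucas_add_two n]
      rw [Nat.add_mod, Nat.add_mod (lucas (n + 1)), ih1, ih2]

lemma lucas_mod4_mod : ∀ k, lucas k % 4 = lucas (k % 6) % 4 := by
  intro k
  induction k using Nat.strong_induction_on with
  | _ k ih =>
      by_cases hk : k < 6
      · rw [Nat.mod_eq_of_lt hk]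
      · have e : k = (k - 6) + 6 := by omega
        rw [e, lucas_mod4, ih (k - 6) (by omega)]
        congr 2
        omega

lemma sq_mod8 (m : ℕ) : m ^ 2 % 8 = 0 ∨ m ^ 2 % 8 = 1 ∨ m ^ 2 % 8 = 4 := by
  rw [Nat.pow_mod]
  have h : m % 8 < 8 := Nat.mod_lt _ (by norm_num)
  interval_cases h' : m % 8 <;> decide

lemma pow_two_mod_six : ∀ a, 1 ≤ a → 2 ^ a % 6 = 2 ∨ 2 ^ a % 6 = 4 := by
  intro a
  induction a with
  | zero => omega
  | succ n ih =>
      intro _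
      by_cases hn : n = 0
      · subst hn; decide
      · have h := ih (by omega)
        have hm := Nat.mul_mod (2 ^ n) 2 6
        rw [pow_succ]
        rcases h with h | h <;> rw [h] at hm <;> omega

lemma exists_prime_mod4 : ∀ n : ℕ, n % 4 = 3 → ∃ p, Nat.Prime p ∧ p % 4 = 3 ∧ p ∣ n := by
  intro n
  induction n using Nat.strong_induction_on with
  | _ n ih =>
      intro hn
      have hn1 : n ≠ 1 := by omega
      have hp := Nat.minFac_prime hn1
      have hdvd : n.minFac ∣ n := Nat.minFac_dvd n
      set p := n.minFac with hpdef
      have hpodd : p % 2 = 1 := by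
        rcases hp.eq_two_or_odd with h2 | h1
        · exfalso
          obtain ⟨q, hq⟩ := hdvd
          rw [h2] at hq
          omega
        · exact h1
      by_cases hp4 : p % 4 = 3
      · exact ⟨p, hp, hp4, hdvd⟩
      · have hp1 : p % 4 = 1 := by omega
        obtain ⟨q, hq⟩ := hdvd
        have hq0 : q ≠ 0 := by rintro rfl; omega
        have hq4 : q % 4 = 3 := by
          have hm := Nat.mul_mod p q 4
          rw [← hq, hn, hp1] at hm
          omega
        have hqlt : q < n := by
          have h2p : 2 ≤ p := hp.two_le
          have : 2 * q ≤ p * q := Nat.mul_le_mul_right q h2p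
          omega
        obtain ⟨r, hr, hr4, hrd⟩ := ih q hqlt hq4
        exact ⟨r, hr, hr4, hrd.trans ⟨p, by rw [hq, Nat.mul_comm]⟩⟩

lemma no_square (m0 c d k m : ℕ) (hm0 : lucas m0 = c) (hc : c = 1 ∨ c = 4)
    (hd4 : 4 ∣ d) (hd0 : 0 < d) (hk : k = m0 + d) (h : lucas k = m ^ 2) : False := by
  set a := d.factorization 2 with ha
  have ha2 : 2 ≤ a := by
    have h44 : (2 : ℕ) ^ 2 ∣ d := by rw [show (2:ℕ)^2 = 4 by norm_num]; exact hd4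
    have := (Nat.Prime.pow_dvd_iff_le_factorization Nat.prime_two (by omega : d ≠ 0)).mp h44
    simpa [ha] using this
  set t := 2 ^ (a - 1) with htdef
  set j := d / 2 ^ a with hjdef
  have hdecomp : 2 ^ a * j = d := Nat.ordProj_mul_ordCompl_eq_self d 2
  have hjodd : Odd j := by
    have h2j : ¬ (2 ∣ j) := by
      simpa [hjdef, ha] using Nat.not_dvd_ordCompl Nat.prime_two (by omega : d ≠ 0)
    rw [Nat.odd_iff]
    omega
  have h2t : 2 * t * j = d := by
    have e : 2 * t = 2 ^ a := by
      rw [htdef, ← _root_.pow_succ' 2 (a - 1)]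
      congr 1
      omega
    rw [e, hdecomp]
  have ht2 : 2 ≤ t := by
    have : (1:ℕ) < 2 ^ (a - 1) := Nat.one_lt_two_pow_iff.mpr (by omega)
    omega
  have hte : Even t := (Nat.even_pow).mpr ⟨even_iff_two_dvd.mpr ⟨1, rfl⟩, by omega⟩
  have ht6 : t % 6 = 2 ∨ t % 6 = 4 := pow_two_mod_six (a - 1) (by omega)
  have hLt4 : lucas t % 4 = 3 := by
    rw [lucas_mod4_mod]
    rcases ht6 with h6 | h6 <;> rw [h6] <;> decide
  obtain ⟨p, pp, hp4, hpdvd⟩ := exists_prime_mod4 (lucas t) hLt4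
  haveI : Fact p.Prime := ⟨pp⟩
  have hcong := lucas_iter t ht2 hte m0 j
  rw [h2t, ← hk, h, hm0] at hcong
  have hpow : ((-1 : ℤ)) ^ j = -1 := Odd.neg_one_pow hjodd
  rw [hpow] at hcong
  have hpz : ((p : ℕ) : ℤ) ∣ (lucas t : ℤ) := Int.natCast_dvd_natCast.mpr hpdvd
  have hcongp := hcong.of_dvd hpz
  have hz : ((m : ZMod p)) ^ 2 = -(c : ZMod p) := by
    have h2 := (ZMod.intCast_eq_intCast_iff _ _ _).mpr hcongp
    push_cast at h2
    linear_combination h2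
  have hp2 : p ≠ 2 := by omega
  have h2ne : (2 : ZMod p) ≠ 0 := by
    intro hcon
    have h2' : ((2 : ℕ) : ZMod p) = 0 := by exact_mod_cast hcon
    rw [ZMod.natCast_eq_zero_iff] at h2'
    exact hp2 ((Nat.prime_dvd_prime_iff_eq pp Nat.prime_two).mp h2')
  have hsq : IsSquare (-1 : ZMod p) := by
    rcases hc with rfl | rfl
    · refine ⟨(m : ZMod p), ?_⟩
      push_cast at hz
      linear_combination -hz
    · refine ⟨(m : ZMod p) * (2 : ZMod p)⁻¹, ?_⟩
      have h4 : ((4 : ℕ) : ZMod p) = (2 : ZMod p) ^ 2 := by push_cast; ring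
      rw [h4] at hz
      field_simp
      linear_combination -hz
  have := ZMod.exists_sq_eq_neg_one_iff.mp hsq
  exact this hp4

theorem stmt_14 (k m : ℕ) (h : lucas k = m ^ 2) : k = 1 ∨ k = 3 := by
  have hs := sq_mod8 m
  have hL : lucas (k % 12) % 8 = m ^ 2 % 8 := by rw [← lucas_mod8_mod, h]
  have hlt : k % 12 < 12 := Nat.mod_lt _ (by norm_num)
  have hr : k % 12 = 1 ∨ k % 12 = 3 ∨ k % 12 = 9 := by
    interval_cases h12 : k % 12 <;>
      simp only [show lucas 0 % 8 = 2 from by decide, show lucas 1 % 8 = 1 from by decide, show lucas 2 % 8 = 3 from by decide, show lucas 3 % 8 = 4 from by decide, show lucas 4 % 8 = 7 from by decide, show lucas 5 % 8 = 3 from by decide, show lucas 6 % 8 = 2 from by decide, show lucas 7 % 8 = 5 from by decide, show lucas 8 % 8 = 7 from by decide, show lucas 9 % 8 = 4 from by decide, show lucas 10 % 8 = 3 from by decide, show lucas 11 % 8 = 7 from by decide] at hL <;> omega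
  rcases hr with hr | hr | hr
  · rcases eq_or_ne k 1 with rfl | hne
    · exact Or.inl rfl
    · exact (no_square 1 1 (k - 1) k m rfl (Or.inl rfl) (by omega) (by omega) (by omega) h).elim
  · rcases eq_or_ne k 3 with rfl | hne
    · exact Or.inr rfl
    · exact (no_square 3 4 (k - 3) k m rfl (Or.inr rfl) (by omega) (by omega) (by omega) h).elim
  · exact (no_square 1 1 (k - 1) k m rfl (Or.inl rfl) (by omega) (by omega) (by omega) h).elim
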